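/- Let F be a field, n ≥ 1, α, β ≥ 0 integers, and let H be an (nα) × (nα) matrix over F written in n×n block form with α×α blocks A_{i,j}, where A_{i,i} = I_α for all i and rank(A_{i,j}) ≤ β for all i ≠ j. Then rank(H) ≥ ∑_{j=1}^{n} max(α - (j-1)β, 0). -/

import Mathlib

/-!
Let `W k` be the span of the columns of `H` lying in its first `k` thick columns. Projecting onto
the coordinates of block row `j` sends `W (j + 1)` onto everything, since it contains the columns
of `A j j = 1`, and sends `W j` into the sum of the column spaces of the `A j i` with `i < j`, of
dimension at most `j * β`. A linear map cannot increase the dimension of a quotient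
`W (j + 1) / W j`, so `dim W (j + 1) - dim W j ≥ α - j * β`, and these increments telescope to
`rank H = dim W n`.
-/

open Module Submodule

namespace Submodule

variable {K V W : Type*} [Field K] [AddCommGroup V] [Module K V] [AddCommGroup W] [Module K W]
  [FiniteDimensional K V]

theorem finrank_biSup_le_sum {ι : Type*} (s : Finset ι) (p : ι → Submodule K V) :
    finrank K ↥(⨆ i ∈ s, p i) ≤ ∑ i ∈ s, finrank K (p i) := by
  classical
  induction s using Finset.induction with
  | empty => simp
  | insert a s ha ih =>
    rw [Finset.sum_insert ha, Finset.iSup_insert]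
    exact (finrank_add_le_finrank_add_finrank _ _).trans (Nat.add_le_add_left ih _)

theorem finrank_map_add_finrank_inf_ker (π : V →ₗ[K] W) (U : Submodule K V) :
    finrank K (U.map π) + finrank K ↥(U ⊓ LinearMap.ker π) = finrank K U := by
  rw [← (π.domRestrict U).finrank_range_add_finrank_ker, LinearMap.range_domRestrict,
    LinearMap.ker_domRestrict, ← finrank_map_subtype_eq, map_comap_subtype]

theorem finrank_add_finrank_map_le_of_le (π : V →ₗ[K] W) {U₁ U₂ : Submodule K V}
    (h : U₁ ≤ U₂) :
    finrank K U₁ + finrank K (U₂.map π) ≤ finrank K U₂ + finrank K (U₁.map π) := by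
  have hker : finrank K ↥(U₁ ⊓ LinearMap.ker π) ≤ finrank K ↥(U₂ ⊓ LinearMap.ker π) :=
    finrank_mono (inf_le_inf_right _ h)
  rw [← finrank_map_add_finrank_inf_ker π U₁, ← finrank_map_add_finrank_inf_ker π U₂]
  omega

end Submodule

namespace Matrix

variable {F ι κ : Type*} [Field F] {n : ℕ}

def leadingBlockColSpan (H : Matrix ι (Fin n × κ) F) (k : ℕ) : Submodule F (ι → F) :=
  span F (H.col '' {p | (p.1 : ℕ) < k})

theorem leadingBlockColSpan_mono (H : Matrix ι (Fin n × κ) F) :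
    Monotone (leadingBlockColSpan H) := fun _ _ hjk =>
  span_mono (Set.image_mono fun _ hp => lt_of_lt_of_le hp hjk)

theorem leadingBlockColSpan_zero (H : Matrix ι (Fin n × κ) F) :
    leadingBlockColSpan H 0 = ⊥ := by
  simp [leadingBlockColSpan]

theorem finrank_leadingBlockColSpan_self [Fintype κ] (H : Matrix ι (Fin n × κ) F) :
    finrank F (leadingBlockColSpan H n) = H.rank := by
  have hall : {p : Fin n × κ | (p.1 : ℕ) < n} = Set.univ := Set.eq_univ_of_forall fun p => p.1.is_lt
  rw [rank_eq_finrank_span_cols, leadingBlockColSpan, hall, Set.image_univ]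

variable {A : Fin n → Fin n → Matrix κ κ F} {H : Matrix (Fin n × κ) (Fin n × κ) F}

theorem map_leadingBlockColSpan (hH : ∀ i j a b, H (i, a) (j, b) = A i j a b) (j : Fin n)
    (k : ℕ) :
    (leadingBlockColSpan H k).map (LinearMap.funLeft F F (j, ·)) =
      ⨆ i : Fin n, ⨆ (_ : (i : ℕ) < k), span F (Set.range (A j i).col) := by
  rw [leadingBlockColSpan, map_span, ← span_iUnion₂]
  congr 1
  ext v
  simp only [Set.mem_image, Set.mem_iUnion, Set.mem_range, Set.mem_ofPred_eq, exists_prop]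
  constructor
  · rintro ⟨_, ⟨⟨i, a⟩, hi, rfl⟩, rfl⟩
    exact ⟨i, hi, a, by ext b; simp [hH]⟩
  · rintro ⟨i, hi, a, rfl⟩
    exact ⟨_, ⟨(i, a), hi, rfl⟩, by ext b; simp [hH]⟩

variable [Fintype κ]

theorem rank_diag_block_le_finrank_succ_sub_add_sum
    (hH : ∀ i j a b, H (i, a) (j, b) = A i j a b) (j : Fin n) :
    (A j j).rank ≤ finrank F (leadingBlockColSpan H (j + 1)) -
      finrank F (leadingBlockColSpan H j) + ∑ i ∈ Finset.Iio j, (A j i).rank := by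
  set π : (Fin n × κ → F) →ₗ[F] κ → F := LinearMap.funLeft F F (j, ·)
  have hmono : leadingBlockColSpan H j ≤ leadingBlockColSpan H (j + 1) :=
    leadingBlockColSpan_mono H (Nat.le_succ j)
  have hdiag : (A j j).rank ≤ finrank F ((leadingBlockColSpan H (j + 1)).map π) := by
    rw [rank_eq_finrank_span_cols, map_leadingBlockColSpan hH]
    exact finrank_mono (le_iSup₂_of_le j (Nat.lt_succ_self j) le_rfl)
  have hmap : (leadingBlockColSpan H j).map π =
      ⨆ i ∈ Finset.Iio j, span F (Set.range (A j i).col) := by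
    simp only [π, map_leadingBlockColSpan hH, Finset.mem_Iio, Fin.lt_def]
  have hoff :
      finrank F ((leadingBlockColSpan H j).map π) ≤ ∑ i ∈ Finset.Iio j, (A j i).rank := by
    rw [hmap]
    exact (finrank_biSup_le_sum _ _).trans_eq (by simp only [rank_eq_finrank_span_cols])
  have hexchange := finrank_add_finrank_map_le_of_le π hmono
  have hgrow := finrank_mono hmono
  omega

theorem card_sub_mul_le_finrank_leadingBlockColSpan_succ_sub [DecidableEq κ] {β : ℕ}
    (hH : ∀ i j a b, H (i, a) (j, b) = A i j a b) {j : Fin n} (hdiag : A j j = 1)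
    (hoff : ∀ i < j, (A j i).rank ≤ β) :
    Fintype.card κ - j * β ≤
      finrank F (leadingBlockColSpan H (j + 1)) - finrank F (leadingBlockColSpan H j) := by
  have hsum : ∑ i ∈ Finset.Iio j, (A j i).rank ≤ j * β := by
    simpa only [Fin.card_Iio, smul_eq_mul] using
      Finset.sum_le_card_nsmul _ _ _ fun i hi => hoff i (Finset.mem_Iio.1 hi)
  have hdiag_rank := rank_diag_block_le_finrank_succ_sub_add_sum hH j
  rw [hdiag, rank_one] at hdiag_rank
  omega

end Matrix

theorem repair_matrix_rank_lower_bound_general (F : Type*) [Field F] (n α β : ℕ)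
    (A : Fin n → Fin n → Matrix (Fin α) (Fin α) F)
    (H : Matrix (Fin n × Fin α) (Fin n × Fin α) F)
    (hH : ∀ i j a b, H (i, a) (j, b) = A i j a b)
    (hdiag : ∀ i, A i i = 1)
    (hoff : ∀ i j, i ≠ j → (A i j).rank ≤ β) :
    ∑ j ∈ Finset.range n, (α - j * β) ≤ H.rank := by
  set f := fun k => finrank F (H.leadingBlockColSpan k)
  have hf : Monotone f := fun _ _ h => finrank_mono (H.leadingBlockColSpan_mono h)
  calc ∑ j ∈ Finset.range n, (α - j * β)
      ≤ ∑ j ∈ Finset.range n, (f (j + 1) - f j) := Finset.sum_le_sum fun j hj => by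
        simpa using Matrix.card_sub_mul_le_finrank_leadingBlockColSpan_succ_sub
          (j := ⟨j, Finset.mem_range.1 hj⟩) hH (hdiag _) fun i hi => hoff _ _ hi.ne'
    _ = f n - f 0 := Finset.sum_range_tsub hf n
    _ = H.rank := by
      simp only [f]
      rw [Matrix.leadingBlockColSpan_zero, finrank_bot, Matrix.finrank_leadingBlockColSpan_self,
        Nat.sub_zero]

/-- For a repair-structured block matrix, rank(H) ≥ ∑_{j=1}^n max(α - (j-1)β, 0). -/
theorem repair_matrix_rank_lower_bound (F : Type*) [Field F] (n α β : ℕ) (hn : 1 ≤ n)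
    (A : Fin n → Fin n → Matrix (Fin α) (Fin α) F)
    (H : Matrix (Fin n × Fin α) (Fin n × Fin α) F)
    (hH : ∀ i j a b, H (i, a) (j, b) = A i j a b)
    (hdiag : ∀ i, A i i = 1)
    (hoff : ∀ i j, i ≠ j → (A i j).rank ≤ β) :
    ∑ j ∈ Finset.range n, (α - j * β) ≤ H.rank :=
  repair_matrix_rank_lower_bound_general F n α β A H hH hdiag hoff
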